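/- Let d be a positive natural number, let T ∈ Matrix (Fin d) (Fin d) ℂ be a density matrix (positive semidefinite with trace 1), and let E ∈ Matrix (Fin d) (Fin d) ℂ be an effect (E and 1 − E positive semidefinite). Then trace(E^{1/2} T E^{1/2} · E) = trace(T · E²) ≥ (trace(T · E))². Consequently, for any ε ∈ [0,1), if trace(T · E) ≥ 1 − ε then trace(E^{1/2} T E^{1/2} · E) ≥ (1 − ε) · trace(T · E). -/

import Mathlib

/-!
Writing `E = √E √E` and cycling the trace turns `tr(√E T √E E)` into `tr(T E²)`. The bound
`tr(T E)² ≤ tr(T E²)` says that the variance `tr(T (E - c)²)` of `E` in the state `T` is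
nonnegative, where `c = tr(T E)` is real since `T` and `E` are Hermitian; it is nonnegative
because the trace of a product of two positive semidefinite matrices is. Then
`(1 - ε) tr(T E) ≤ tr(T E)² ≤ tr(T E²)` as soon as `1 - ε ≤ tr(T E)`, since `tr(T E) ≥ 0`.
-/

open scoped ComplexOrder Matrix

namespace Matrix.PosSemidef

/-- The positive semidefinite square root of a positive semidefinite matrix
(the definition Mathlib had in December 2024, since removed). -/
noncomputable def sqrt {n : Type*} [Fintype n] [DecidableEq n] {𝕜 : Type*} [RCLike 𝕜]
    {A : Matrix n n 𝕜} (hA : A.PosSemidef) : Matrix n n 𝕜 :=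
  hA.1.eigenvectorUnitary.1 * Matrix.diagonal ((↑) ∘ (√·) ∘ hA.1.eigenvalues) *
  (star hA.1.eigenvectorUnitary : Matrix n n 𝕜)

variable {n 𝕜 : Type*} [Fintype n] [DecidableEq n] [RCLike 𝕜] {T A B : Matrix n n 𝕜}

lemma sqrt_eq_conjStarAlgAut (hA : A.PosSemidef) :
    hA.sqrt = Unitary.conjStarAlgAut 𝕜 _ hA.1.eigenvectorUnitary
      (diagonal ((↑) ∘ (√·) ∘ hA.1.eigenvalues)) :=
  rfl

lemma sqrt_mul_self (hA : A.PosSemidef) : hA.sqrt * hA.sqrt = A := by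
  conv_rhs => rw [hA.1.spectral_theorem]
  rw [sqrt_eq_conjStarAlgAut, ← map_mul, diagonal_mul_diagonal]
  congr 2
  funext i
  simp [← RCLike.ofReal_mul, Real.mul_self_sqrt (hA.eigenvalues_nonneg i)]

lemma posSemidef_sqrt (hA : A.PosSemidef) : hA.sqrt.PosSemidef := by
  have hD : (diagonal ((↑) ∘ (√·) ∘ hA.1.eigenvalues : n → 𝕜)).PosSemidef :=
    posSemidef_diagonal_iff.mpr fun i => RCLike.ofReal_nonneg.mpr (Real.sqrt_nonneg _)
  simpa [sqrt, ← star_eq_conjTranspose] using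
    hD.mul_mul_conjTranspose_same hA.1.eigenvectorUnitary.1

lemma trace_sqrt_mul_mul_sqrt_mul_self (hA : A.PosSemidef) (B : Matrix n n 𝕜) :
    (hA.sqrt * B * hA.sqrt * A).trace = (B * (A * A)).trace := by
  have hA2 : hA.sqrt * A * hA.sqrt = A * A :=
    calc _ = hA.sqrt * (hA.sqrt * hA.sqrt) * hA.sqrt := by rw [hA.sqrt_mul_self]
      _ = hA.sqrt * hA.sqrt * (hA.sqrt * hA.sqrt) := by simp only [mul_assoc]
      _ = A * A := by rw [hA.sqrt_mul_self]
  rw [mul_assoc, mul_assoc, trace_mul_comm, ← hA2]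
  simp only [mul_assoc]

lemma trace_mul_nonneg (hA : A.PosSemidef) (hB : B.PosSemidef) : 0 ≤ (A * B).trace := by
  have h := (hA.conjTranspose_mul_mul_same hB.sqrt).trace_nonneg
  rwa [hB.posSemidef_sqrt.1, trace_mul_cycle, hB.sqrt_mul_self, trace_mul_comm] at h

lemma sq_trace_mul_le_trace_mul_mul_self (hT : T.PosSemidef) (hTtr : T.trace = 1)
    (hA : A.IsHermitian) : (T * A).trace ^ 2 ≤ (T * (A * A)).trace := by
  generalize hc_def : (T * A).trace = c
  have hc : star c = c := by
    rw [← hc_def, ← trace_conjTranspose, conjTranspose_mul, hA.eq, hT.1.eq, trace_mul_comm]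
  have hDevHerm : (A - c • 1)ᴴ = A - c • 1 := by
    rw [conjTranspose_sub, conjTranspose_smul, hA.eq, hc, conjTranspose_one]
  have hDev : ((A - c • 1) * (A - c • 1)).PosSemidef := by
    have h := posSemidef_conjTranspose_mul_self (A - c • 1)
    rwa [hDevHerm] at h
  have hVar : (T * ((A - c • 1) * (A - c • 1))).trace = (T * (A * A)).trace - c ^ 2 := by
    simp only [sub_mul, mul_sub, smul_mul_assoc, mul_smul_comm, one_mul, mul_one,
      Matrix.trace_sub, Matrix.trace_smul, smul_eq_mul, hTtr, hc_def]
    ring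
  exact sub_nonneg.mp (hVar ▸ hT.trace_mul_nonneg hDev)

end Matrix.PosSemidef

theorem lueders_approximate_ideality_general
    (d : ℕ) (T E : Matrix (Fin d) (Fin d) ℂ)
    (hT : T.PosSemidef) (hTtr : T.trace = 1)
    (hE : E.PosSemidef) :
    (hE.sqrt * T * hE.sqrt * E).trace = (T * (E * E)).trace ∧
    ((T * E).trace) ^ 2 ≤ (T * (E * E)).trace ∧
    ∀ ε : ℝ, 0 ≤ ε → ε < 1 → ((1 - ε : ℂ)) ≤ (T * E).trace →
      ((1 - ε : ℂ)) * (T * E).trace ≤ (hE.sqrt * T * hE.sqrt * E).trace := by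
  have hLueders := hE.trace_sqrt_mul_mul_sqrt_mul_self T
  have hVariance := hT.sq_trace_mul_le_trace_mul_mul_self hTtr hE.1
  refine ⟨hLueders, hVariance, fun ε _ _ hε => ?_⟩
  calc (1 - ε : ℂ) * (T * E).trace ≤ (T * E).trace * (T * E).trace :=
        mul_le_mul_of_nonneg_right hε (hT.trace_mul_nonneg hE)
    _ = (T * E).trace ^ 2 := (sq _).symm
    _ ≤ (T * (E * E)).trace := hVariance
    _ = (hE.sqrt * T * hE.sqrt * E).trace := hLueders.symm

/-- Approximate ideality of generalized Lüders operations: the Lüders operation of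
an effect `E` does not decrease an already-high outcome probability. -/
theorem lueders_approximate_ideality
    (d : ℕ) (hd : 0 < d) (T E : Matrix (Fin d) (Fin d) ℂ)
    (hT : T.PosSemidef) (hTtr : T.trace = 1)
    (hE : E.PosSemidef) (hE' : (1 - E).PosSemidef) :
    (hE.sqrt * T * hE.sqrt * E).trace = (T * (E * E)).trace ∧
    ((T * E).trace) ^ 2 ≤ (T * (E * E)).trace ∧
    ∀ ε : ℝ, 0 ≤ ε → ε < 1 → ((1 - ε : ℂ)) ≤ (T * E).trace →
      ((1 - ε : ℂ)) * (T * E).trace ≤ (hE.sqrt * T * hE.sqrt * E).trace :=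
  lueders_approximate_ideality_general d T E hT hTtr hE
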